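/- arXiv:1207.1077 — 9 statements merged into one kernel-verified Lean document; each statement's English description precedes it below -/
import Mathlib

section
/- If Σⱼ aⱼ > p then every point (y,z) ∈ Q satisfies y ≥ h_{ν+1} ≥ 0, where ν := max{k : Σ_{j≤k} aⱼ ≤ p}. -/
open Finset

/-- Membership in the mixing set with knapsack constraint `Q`. -/
def memQ (n : ℕ) (h a : Fin n → ℝ) (p : ℝ) (y : ℝ) (z : Fin n → ℝ) : Prop :=
  0 ≤ y ∧ (∀ j, z j = 0 ∨ z j = 1) ∧ (∑ j, a j * z j) ≤ p ∧ ∀ j, h j ≤ y + h j * z j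

/-- Partial sum `s_k = ∑_{j ≤ k} a_j` (1-indexed paper notation; here the first `k`
0-based indices). -/
def sk (n : ℕ) (a : Fin n → ℝ) (k : ℕ) : ℝ :=
  ∑ j ∈ univ.filter (fun j : Fin n => (j : ℕ) < k), a j

/-- Membership in the residual knapsack set `P_k`. -/
def memPk (n : ℕ) (a : Fin n → ℝ) (p : ℝ) (k : ℕ) (z : Fin n → ℝ) : Prop :=
  (∀ j, z j = 0 ∨ z j = 1) ∧
    (∑ j ∈ univ.filter (fun j : Fin n => k ≤ (j : ℕ)), a j * z j) ≤ p - sk n a k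

/-- The minimizer function `f_k(α) = min{ ∑_{j > k} α_j z_j : z ∈ P_k }`. -/
noncomputable def fk (n : ℕ) (a : Fin n → ℝ) (p : ℝ) (α : Fin n → ℝ) (k : ℕ) : ℝ :=
  sInf {x : ℝ | ∃ z : Fin n → ℝ, memPk n a p k z ∧
    x = ∑ j ∈ univ.filter (fun j : Fin n => k ≤ (j : ℕ)), α j * z j}

/-- Every `(y,z) ∈ Q` satisfies `y ≥ h_{ν+1} ≥ 0`, where `ν = max{k : s_k ≤ p}`. -/
theorem stmt4 (n : ℕ) (hn : 0 < n) (h a : Fin n → ℝ) (p : ℝ)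
    (hmono : ∀ i j : Fin n, i ≤ j → h j ≤ h i) (hhnn : ∀ j, 0 ≤ h j)
    (hann : ∀ j, 0 ≤ a j) (hap : ∀ j, a j ≤ p) (hsum : p < ∑ j, a j)
    (ν : ℕ) (hνn : ν < n) (hν1 : sk n a ν ≤ p) (hν2 : p < sk n a (ν + 1)) :
    ∀ (y : ℝ) (z : Fin n → ℝ), memQ n h a p y z →
      h ⟨ν, hνn⟩ ≤ y ∧ 0 ≤ h ⟨ν, hνn⟩ := by
  intro y z ⟨hy0, hz01, hknap, hineq⟩
  refine ⟨?_, hhnn _⟩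
  -- find j ≤ ν with z j = 0
  by_cases hex : ∃ j : Fin n, (j : ℕ) ≤ ν ∧ z j = 0
  · obtain ⟨j, hjν, hjz⟩ := hex
    have := hineq j
    rw [hjz, mul_zero, add_zero] at this
    exact le_trans (hmono j ⟨ν, hνn⟩ hjν) this
  · exfalso
    push_neg at hex
    have hone : ∀ j : Fin n, (j : ℕ) < ν + 1 → z j = 1 := by
      intro j hj
      rcases hz01 j with h0 | h1
      · exact absurd h0 (hex j (Nat.lt_succ_iff.mp hj))
      · exact h1
    have h1 : sk n a (ν + 1) ≤ ∑ j, a j * z j := by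
      rw [sk]
      calc ∑ j ∈ univ.filter (fun j : Fin n => (j : ℕ) < ν + 1), a j
          = ∑ j ∈ univ.filter (fun j : Fin n => (j : ℕ) < ν + 1), a j * z j := by
            refine Finset.sum_congr rfl fun j hj => ?_
            rw [hone j (by simpa using hj), mul_one]
        _ ≤ ∑ j, a j * z j := by
            refine Finset.sum_le_sum_of_subset_of_nonneg (Finset.filter_subset _ _) ?_
            intro j _ _
            rcases hz01 j with h0 | h1
            · rw [h0, mul_zero]
            · rw [h1, mul_one]; exact hann j
    linarith
end

section
/- (Validity characterization, forward direction) Suppose y + Σⱼ αⱼzⱼ ≥ β holds for every (y,z) ∈ Q. Then for every k with 0 ≤ k ≤ ν, Σ_{j≤k} αⱼ + f_k(α) + h_{k+1} ≥ β, where f_k(α) := min{Σ_{j>k} αⱼzⱼ : z ∈ {0,1}ⁿ, Σ_{j>k} aⱼzⱼ ≤ p − Σ_{j≤k} aⱼ}. -/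
open Finset

/-!
Each `z ∈ P_k`, completed by ones on the first `k` items and paired with `y = h_k`, is a point
of `Q`; validity of the inequality at that point, minimized over `z ∈ P_k`, is the claim.
-/

def fillPrefix {n : ℕ} (k : ℕ) (z : Fin n → ℝ) : Fin n → ℝ :=
  fun j => if (j : ℕ) < k then 1 else z j

lemma sum_mul_fillPrefix {n : ℕ} (c z : Fin n → ℝ) (k : ℕ) :
    ∑ j, c j * fillPrefix k z j =
      (∑ j ∈ univ.filter (fun j : Fin n => (j : ℕ) < k), c j) +
        ∑ j ∈ univ.filter (fun j : Fin n => k ≤ (j : ℕ)), c j * z j := by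
  rw [← sum_filter_add_sum_filter_not univ (fun j : Fin n => (j : ℕ) < k)]
  simp only [not_lt]
  congr 1
  · refine sum_congr rfl fun j hj => ?_
    simp [fillPrefix, (mem_filter.mp hj).2]
  · refine sum_congr rfl fun j hj => ?_
    simp [fillPrefix, not_lt.mpr (mem_filter.mp hj).2]

lemma sk_mono {n : ℕ} {a : Fin n → ℝ} (ha : ∀ j, 0 ≤ a j) {k m : ℕ} (hkm : k ≤ m) :
    sk n a k ≤ sk n a m :=
  sum_le_sum_of_subset_of_nonneg
    (monotone_filter_right _ fun _ _ hj => lt_of_lt_of_le hj hkm)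
    fun j _ _ => ha j

lemma memPk_zero {n : ℕ} {a : Fin n → ℝ} {p : ℝ} {k : ℕ} (hk : sk n a k ≤ p) :
    memPk n a p k 0 :=
  ⟨fun _ => Or.inl rfl, by simpa using hk⟩

/-- `sk n a k ≤ p` makes `P_k` nonempty, so `fk` is a genuine infimum, not `sInf ∅ = 0`. -/
lemma le_fk {n : ℕ} {a α : Fin n → ℝ} {p c : ℝ} {k : ℕ} (hk : sk n a k ≤ p)
    (hc : ∀ z, memPk n a p k z →
      c ≤ ∑ j ∈ univ.filter (fun j : Fin n => k ≤ (j : ℕ)), α j * z j) :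
    c ≤ fk n a p α k :=
  le_csInf ⟨_, 0, memPk_zero hk, rfl⟩ fun _ ⟨z, hz, hx⟩ => hx ▸ hc z hz

/-- With `y = h_k`, the constraints `y + h_j z_j ≥ h_j` hold for `j < k` because `z_j = 1`
there, and for `j ≥ k` because `h_j ≤ h_k`. -/
lemma memQ_fillPrefix {n : ℕ} {h a : Fin n → ℝ} {p : ℝ}
    (hmono : ∀ i j : Fin n, i ≤ j → h j ≤ h i) (hhnn : ∀ j, 0 ≤ h j)
    {k : ℕ} (hkn : k < n) {z : Fin n → ℝ} (hz : memPk n a p k z) :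
    memQ n h a p (h ⟨k, hkn⟩) (fillPrefix k z) := by
  obtain ⟨hz01, hzsum⟩ := hz
  have hhk := hhnn ⟨k, hkn⟩
  refine ⟨hhk, fun j => ?_, ?_, fun j => ?_⟩
  · by_cases hj : (j : ℕ) < k
    · simp [fillPrefix, hj]
    · simpa [fillPrefix, hj] using hz01 j
  · rw [sum_mul_fillPrefix]
    unfold sk at hzsum
    linarith
  · by_cases hj : (j : ℕ) < k
    · simp [fillPrefix, hj, hhk]
    · simp only [fillPrefix, hj, if_false]
      rcases hz01 j with h0 | h1
      · simpa [h0] using hmono ⟨k, hkn⟩ j (Fin.le_def.mpr (not_lt.mp hj))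
      · simp [h1, hhk]

theorem stmt5_general (n : ℕ) (h a : Fin n → ℝ) (p : ℝ)
    (hmono : ∀ i j : Fin n, i ≤ j → h j ≤ h i) (hhnn : ∀ j, 0 ≤ h j)
    (hann : ∀ j, 0 ≤ a j)
    (ν : ℕ) (hνn : ν < n) (hν1 : sk n a ν ≤ p)
    (α : Fin n → ℝ) (β : ℝ)
    (hvalid : ∀ (y : ℝ) (z : Fin n → ℝ), memQ n h a p y z →
      β ≤ y + ∑ j, α j * z j) :
    ∀ k : ℕ, ∀ hk : k ≤ ν,
      β ≤ (∑ j ∈ univ.filter (fun j : Fin n => (j : ℕ) < k), α j) +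
        fk n a p α k + h ⟨k, lt_of_le_of_lt hk hνn⟩ := by
  intro k hk
  have hkn : k < n := hk.trans_lt hνn
  have hfk : β - h ⟨k, hkn⟩ - ∑ j ∈ univ.filter (fun j : Fin n => (j : ℕ) < k), α j ≤
      fk n a p α k := by
    refine le_fk ((sk_mono hann hk).trans hν1) fun z hz => ?_
    have hβ := hvalid _ _ (memQ_fillPrefix hmono hhnn hkn hz)
    rw [sum_mul_fillPrefix] at hβ
    linarith
  linarith

/-- Validity characterization, forward direction: if `y + ∑ α_j z_j ≥ β` is valid
for `Q`, then for every `0 ≤ k ≤ ν`, `∑_{j≤k} α_j + f_k(α) + h_{k+1} ≥ β`. -/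
theorem stmt5 (n : ℕ) (hn : 0 < n) (h a : Fin n → ℝ) (p : ℝ)
    (hmono : ∀ i j : Fin n, i ≤ j → h j ≤ h i) (hhnn : ∀ j, 0 ≤ h j)
    (hann : ∀ j, 0 ≤ a j) (hap : ∀ j, a j ≤ p) (hsum : p < ∑ j, a j)
    (ν : ℕ) (hνn : ν < n) (hν1 : sk n a ν ≤ p) (hν2 : p < sk n a (ν + 1))
    (α : Fin n → ℝ) (β : ℝ)
    (hvalid : ∀ (y : ℝ) (z : Fin n → ℝ), memQ n h a p y z →
      β ≤ y + ∑ j, α j * z j) :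
    ∀ k : ℕ, ∀ hk : k ≤ ν,
      β ≤ (∑ j ∈ univ.filter (fun j : Fin n => (j : ℕ) < k), α j) +
        fk n a p α k + h ⟨k, lt_of_le_of_lt hk hνn⟩ :=
  stmt5_general n h a p hmono hhnn hann ν hνn hν1 α β hvalid
end

section
/- (Validity characterization, converse direction) Suppose α ∈ ℝⁿ and β ∈ ℝ satisfy Σ_{j≤k} αⱼ + f_k(α) + h_{k+1} ≥ β for all 0 ≤ k ≤ ν. Then y + Σⱼ αⱼzⱼ ≥ β holds for every (y,z) ∈ Q. -/
open Finset

/-- Validity characterization, converse direction: if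
`∑_{j≤k} α_j + f_k(α) + h_{k+1} ≥ β` for all `0 ≤ k ≤ ν`, then
`y + ∑ α_j z_j ≥ β` holds on `Q`. -/
theorem stmt6 (n : ℕ) (hn : 0 < n) (h a : Fin n → ℝ) (p : ℝ)
    (hmono : ∀ i j : Fin n, i ≤ j → h j ≤ h i) (hhnn : ∀ j, 0 ≤ h j)
    (hann : ∀ j, 0 ≤ a j) (hap : ∀ j, a j ≤ p) (hsum : p < ∑ j, a j)
    (ν : ℕ) (hνn : ν < n) (hν1 : sk n a ν ≤ p) (hν2 : p < sk n a (ν + 1))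
    (α : Fin n → ℝ) (β : ℝ)
    (hG : ∀ k : ℕ, ∀ hk : k ≤ ν,
      β ≤ (∑ j ∈ univ.filter (fun j : Fin n => (j : ℕ) < k), α j) +
        fk n a p α k + h ⟨k, lt_of_le_of_lt hk hνn⟩) :
    ∀ (y : ℝ) (z : Fin n → ℝ), memQ n h a p y z →
      β ≤ y + ∑ j, α j * z j := by
  intro y z hQ
  obtain ⟨hy, hz01, hzp, hzh⟩ := hQ
  classical
  set S : Finset (Fin n) := univ.filter (fun j => y < h j) with hS
  set k : ℕ := S.card with hk
  -- S is down-closed, hence S = {j : j.val < k}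
  have hmem : ∀ j : Fin n, j ∈ S ↔ (j : ℕ) < k := by
    intro j
    constructor
    · intro hj
      have hsub : Finset.Iic j ⊆ S := by
        intro i hi
        simp only [Finset.mem_Iic] at hi
        simp only [hS, mem_filter, mem_univ, true_and] at hj ⊢
        exact lt_of_lt_of_le hj (hmono i j hi)
      have := Finset.card_le_card hsub
      simpa [Fin.card_Iic] using this
    · intro hj
      by_contra hjS
      have hsub : S ⊆ Finset.Iio j := by
        intro i hi
        simp only [Finset.mem_Iio]
        by_contra hij
        push_neg at hij
        apply hjS
        simp only [hS, mem_filter, mem_univ, true_and] at hi ⊢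
        exact lt_of_lt_of_le hi (hmono j i hij)
      have := Finset.card_le_card hsub
      simp [Fin.card_Iio] at this
      omega
  -- z j = 1 for j.val < k
  have hz1 : ∀ j : Fin n, (j : ℕ) < k → z j = 1 := by
    intro j hj
    rcases hz01 j with h0 | h1
    · exfalso
      have hyj : y < h j := by
        have := (hmem j).2 hj
        simpa [hS] using this
      have := hzh j
      rw [h0] at this
      simp at this
      linarith
    · exact h1
  -- each a j * z j is nonneg
  have haz : ∀ j : Fin n, 0 ≤ a j * z j := by
    intro j
    rcases hz01 j with h0 | h1
    · simp [h0]
    · simp [h1, hann j]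
  -- split sums
  have hsplit : ∀ g : Fin n → ℝ,
      (∑ j ∈ univ.filter (fun j : Fin n => (j : ℕ) < k), g j) +
      (∑ j ∈ univ.filter (fun j : Fin n => k ≤ (j : ℕ)), g j) = ∑ j, g j := by
    intro g
    rw [← Finset.sum_filter_add_sum_filter_not univ (fun j : Fin n => (j : ℕ) < k) g]
    congr 1
    apply Finset.sum_congr _ (fun _ _ => rfl)
    apply Finset.filter_congr
    intro j _
    simp [not_lt]
  -- sum over j < k of a j * z j equals sk n a k
  have hsk_eq : (∑ j ∈ univ.filter (fun j : Fin n => (j : ℕ) < k), a j * z j) = sk n a k := by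
    rw [sk]
    apply Finset.sum_congr rfl
    intro j hj
    simp only [mem_filter, mem_univ, true_and] at hj
    rw [hz1 j hj, mul_one]
  -- k ≤ ν
  have hkν : k ≤ ν := by
    by_contra hkν
    push_neg at hkν
    have h1 : sk n a (ν + 1) ≤ sk n a k := by
      apply Finset.sum_le_sum_of_subset_of_nonneg
      · intro j hj
        simp only [mem_filter, mem_univ, true_and] at hj ⊢
        omega
      · intro j _ _
        exact hann j
    have h2 : sk n a k ≤ ∑ j, a j * z j := by
      rw [← hsk_eq, ← hsplit (fun j => a j * z j)]
      have : 0 ≤ ∑ j ∈ univ.filter (fun j : Fin n => k ≤ (j : ℕ)), a j * z j :=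
        Finset.sum_nonneg (fun j _ => haz j)
      linarith
    linarith
  have hkn : k < n := lt_of_le_of_lt hkν hνn
  -- h ⟨k, hkn⟩ ≤ y
  have hhy : h ⟨k, hkn⟩ ≤ y := by
    by_contra hc
    push_neg at hc
    have : (⟨k, hkn⟩ : Fin n) ∈ S := by
      simp [hS, hc]
    have := (hmem _).1 this
    simp at this
  -- z ∈ P_k
  have hPk : memPk n a p k z := by
    refine ⟨hz01, ?_⟩
    have := hsplit (fun j => a j * z j)
    rw [hsk_eq] at this
    linarith
  -- fk ≤ tail sum
  have hfk : fk n a p α k ≤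
      ∑ j ∈ univ.filter (fun j : Fin n => k ≤ (j : ℕ)), α j * z j := by
    apply csInf_le
    · refine ⟨∑ j ∈ univ.filter (fun j : Fin n => k ≤ (j : ℕ)), min (α j) 0, ?_⟩
      rintro x ⟨w, hw, rfl⟩
      apply Finset.sum_le_sum
      intro j _
      rcases hw.1 j with h0 | h1
      · simp [h0, min_le_right]
      · simp [h1, min_le_left]
    · exact ⟨z, hPk, rfl⟩
  -- head sum of α equals head sum of α * z
  have hαhead : (∑ j ∈ univ.filter (fun j : Fin n => (j : ℕ) < k), α j) =
      ∑ j ∈ univ.filter (fun j : Fin n => (j : ℕ) < k), α j * z j := by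
    apply Finset.sum_congr rfl
    intro j hj
    simp only [mem_filter, mem_univ, true_and] at hj
    rw [hz1 j hj, mul_one]
  have hGk := hG k hkν
  have hfin := hsplit (fun j => α j * z j)
  rw [hαhead] at hGk
  linarith
end

section
/- If y + Σⱼ αⱼzⱼ ≥ β is a facet-defining inequality for conv(Q) (i.e., valid and the set of points of Q satisfying it at equality has affine dimension n), then β = h₁ + f₀(α), where f₀(α) := min{Σⱼ αⱼzⱼ : z ∈ {0,1}ⁿ, Σⱼ aⱼzⱼ ≤ p}. -/
open Finset

/-- If `y + ∑ α_j z_j ≥ β` is facet-defining for `conv(Q)` (valid, and its equality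
set on `Q` contains `n+1` affinely independent points), then `β = h₁ + f₀(α)`. -/
theorem stmt8 (n : ℕ) (hn : 0 < n) (h a : Fin n → ℝ) (p : ℝ)
    (hmono : ∀ i j : Fin n, i ≤ j → h j ≤ h i) (hhnn : ∀ j, 0 ≤ h j)
    (hann : ∀ j, 0 ≤ a j) (hap : ∀ j, a j ≤ p) (hsum : p < ∑ j, a j)
    (α : Fin n → ℝ) (β : ℝ)
    (hvalid : ∀ (y : ℝ) (z : Fin n → ℝ), memQ n h a p y z →
      β ≤ y + ∑ j, α j * z j)
    (pts : Fin (n + 1) → ℝ × (Fin n → ℝ))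
    (hpts : ∀ i, memQ n h a p (pts i).1 (pts i).2 ∧
      (pts i).1 + ∑ j, α j * (pts i).2 j = β)
    (hindep : AffineIndependent ℝ pts) :
    β = h ⟨0, hn⟩ + fk n a p α 0 := by
  set i0 : Fin n := ⟨0, hn⟩ with hi0
  -- the feasible-value set
  set S : Set ℝ := {x : ℝ | ∃ z : Fin n → ℝ,
      (∀ j, z j = 0 ∨ z j = 1) ∧ (∑ j, a j * z j) ≤ p ∧ x = ∑ j, α j * z j} with hSdef
  have hfk : fk n a p α 0 = sInf S := by
    unfold fk memPk sk
    congr 1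
    ext x
    simp [hSdef, and_assoc]
  -- S is finite
  have hSfin : S.Finite := by
    have : S ⊆ (fun z : Fin n → ℝ => ∑ j, α j * z j) ''
        (Set.pi Set.univ (fun _ : Fin n => ({0, 1} : Set ℝ))) := by
      rintro x ⟨z, hz01, _, rfl⟩
      exact ⟨z, fun j _ => by rcases hz01 j with h' | h' <;> simp [h'], rfl⟩
    exact ((Set.Finite.pi (fun _ => Set.toFinite _)).image _).subset this
  have hSne : S.Nonempty := ⟨0, 0, by simp, by simpa using (hann i0).trans (hap i0), by simp⟩
  have hbdd : BddBelow S := hSfin.bddBelow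
  have hmemS : sInf S ∈ S := hSne.csInf_mem hSfin
  -- upper bound : β ≤ h i0 + sInf S
  have hub : β ≤ h i0 + sInf S := by
    obtain ⟨z, hz01, hzk, hzs⟩ := hmemS
    have hQ : memQ n h a p (h i0) z := by
      refine ⟨hhnn i0, hz01, hzk, fun j => ?_⟩
      rcases hz01 j with h' | h'
      · rw [h', mul_zero, add_zero]
        exact hmono i0 j (by exact Fin.mk_le_of_le_val (Nat.zero_le _))
      · rw [h', mul_one]
        nlinarith [hhnn i0, hhnn j]
    have := hvalid (h i0) z hQ
    rw [← hzs] at this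
    linarith
  -- there is an equality point with z i0 = 0
  have key : ∃ i, (pts i).2 i0 = 0 := by
    by_contra hc
    push_neg at hc
    have hone : ∀ i, (pts i).2 i0 = 1 := fun i => ((hpts i).1.2.1 i0).resolve_left (hc i)
    have hli := (affineIndependent_iff_linearIndependent_vsub ℝ pts 0).mp hindep
    set v : {i : Fin (n+1) // i ≠ 0} → ℝ × (Fin n → ℝ) := fun i => pts i -ᵥ pts 0 with hv
    -- each v i satisfies two linear relations
    have hv2 : ∀ i, (v i).2 i0 = 0 := by
      intro i; simp only [hv, vsub_eq_sub, Prod.snd_sub, Pi.sub_apply, hone, sub_self]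
    have hv1 : ∀ i, (v i).1 = - ∑ j, α j * (v i).2 j := by
      intro i
      have e1 := (hpts (i : Fin (n+1))).2
      have e0 := (hpts 0).2
      simp only [hv, vsub_eq_sub, Prod.snd_sub, Prod.fst_sub, Pi.sub_apply, mul_sub,
        Finset.sum_sub_distrib]
      linarith
    -- project away coordinates i0 and fst
    let π : (ℝ × (Fin n → ℝ)) →ₗ[ℝ] ({j : Fin n // j ≠ i0} → ℝ) :=
      (LinearMap.funLeft ℝ ℝ (Subtype.val : {j : Fin n // j ≠ i0} → Fin n)).comp (LinearMap.snd ℝ ℝ (Fin n → ℝ))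
    have hli2 : LinearIndependent ℝ (fun i => π (v i)) := by
      rw [Fintype.linearIndependent_iff] at hli ⊢
      intro c hc0
      apply hli c
      have hw2 : ∀ j : Fin n, ∑ i, c i * (v i).2 j = 0 := by
        intro j
        by_cases hj : j = i0
        · subst hj; simp [hv2]
        · have := congrFun hc0 ⟨j, hj⟩
          simpa [π, LinearMap.funLeft, Finset.sum_apply, Prod.smul_snd] using this
      have hw1 : ∑ i, c i * (v i).1 = 0 := by
        calc ∑ i, c i * (v i).1 = ∑ i, c i * (- ∑ j, α j * (v i).2 j) := by
              exact Finset.sum_congr rfl fun i _ => by rw [hv1]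
          _ = ∑ i, ∑ j, -(α j * (c i * (v i).2 j)) := by
              refine Finset.sum_congr rfl fun i _ => ?_
              rw [mul_neg, Finset.mul_sum, ← Finset.sum_neg_distrib]
              exact Finset.sum_congr rfl fun j _ => by ring
          _ = ∑ j, ∑ i, -(α j * (c i * (v i).2 j)) := Finset.sum_comm
          _ = - ∑ j, α j * ∑ i, c i * (v i).2 j := by
              rw [← Finset.sum_neg_distrib]
              refine Finset.sum_congr rfl fun j _ => ?_
              rw [Finset.mul_sum, ← Finset.sum_neg_distrib]
          _ = 0 := by simp [hw2]
      have : (∑ i, c i • v i) = 0 := by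
        have h1 : (∑ i, c i • v i).1 = ∑ i, c i * (v i).1 := by
          simp [Prod.fst_sum]
        have h2 : ∀ j, (∑ i, c i • v i).2 j = ∑ i, c i * (v i).2 j := by
          intro j; simp [Prod.snd_sum, Finset.sum_apply]
        ext
        · rw [h1, hw1]; rfl
        · rename_i j; rw [h2 j, hw2 j]; rfl
      exact this
    have hcard := hli2.fintype_card_le_finrank
    rw [Module.finrank_pi] at hcard
    rw [Fintype.card_subtype_compl, Fintype.card_subtype_eq] at hcard
    rw [Fintype.card_subtype_compl, Fintype.card_subtype_eq] at hcard
    simp at hcard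
    omega
  -- lower bound
  obtain ⟨i, hi⟩ := key
  obtain ⟨⟨hy0, hz01, hzk, hyh⟩, heq⟩ := hpts i
  have hyge : h i0 ≤ (pts i).1 := by
    have := hyh i0
    rw [hi, mul_zero, add_zero] at this
    exact this
  have hSle : sInf S ≤ ∑ j, α j * (pts i).2 j :=
    csInf_le hbdd ⟨(pts i).2, hz01, hzk, rfl⟩
  rw [hfk]
  linarith
end

section
/- If a_k = 0 and α_k < 0, then the inequality y + Σⱼ αⱼzⱼ ≥ β (valid for Q) is dominated: the inequality y + Σ_{j≠k} αⱼzⱼ ≥ β − α_k is also valid for Q, and the original inequality is the sum of this one and the valid inequality −α_k(1 − z_k) ≥ 0. In particular, a facet-defining inequality y + Σⱼ αⱼzⱼ ≥ β of conv(Q) with α_k < 0 must have a_k > 0. -/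
open Finset

/-!
When `a k = 0`, raising `z k` to `1` keeps a point in `Q`, and applying the valid inequality
at the raised point gives the dominating inequality. If moreover `α k < 0`, comparing the two
inequalities at a point of the face `y + ∑ α z = β` forces `z k = 1` there. So the face lies in
the fibre over `(β, 1)` of the surjective linear map `(y, z) ↦ (y + ∑ α z, z k)` onto `ℝ²`, an
affine subspace of dimension `n - 1`, which cannot contain `n + 1` affinely independent points.
-/

open Module

theorem AffineIndependent.card_le_finrank_ker_add_one {k V W ι : Type*} [DivisionRing k]
    [AddCommGroup V] [Module k V] [FiniteDimensional k V] [AddCommGroup W] [Module k W]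
    [Fintype ι] {p : ι → V} (hp : AffineIndependent k p) (f : V →ₗ[k] W) {c : W}
    (hf : ∀ i, f (p i) = c) :
    Fintype.card ι ≤ finrank k (LinearMap.ker f) + 1 := by
  have hspan : vectorSpan k (Set.range p) ≤ LinearMap.ker f := by
    rw [vectorSpan_def, Submodule.span_le]
    rintro _ ⟨_, ⟨i, rfl⟩, _, ⟨j, rfl⟩, rfl⟩
    simp [hf]
  exact hp.card_le_finrank_succ.trans (by gcongr; exact Submodule.finrank_mono hspan)

section LhsCoordMap

variable {ι : Type*} [Fintype ι]

def lhsCoordMap (α : ι → ℝ) (k : ι) : ℝ × (ι → ℝ) →ₗ[ℝ] ℝ × ℝ where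
  toFun v := (v.1 + ∑ j, α j * v.2 j, v.2 k)
  map_add' u v := by
    ext
    · simp only [Prod.fst_add, Prod.snd_add, Pi.add_apply, mul_add, sum_add_distrib]
      ring
    · rfl
  map_smul' c v := by
    ext
    · simp [mul_add, mul_sum, mul_left_comm]
    · rfl

theorem lhsCoordMap_apply (α : ι → ℝ) (k : ι) (v : ℝ × (ι → ℝ)) :
    lhsCoordMap α k v = (v.1 + ∑ j, α j * v.2 j, v.2 k) := rfl

theorem lhsCoordMap_surjective [DecidableEq ι] (α : ι → ℝ) (k : ι) :
    Function.Surjective (lhsCoordMap α k) := by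
  rintro ⟨s, t⟩
  refine ⟨(s - α k * t, Pi.single k t), ?_⟩
  simp [lhsCoordMap_apply, Pi.single_apply]

theorem finrank_ker_lhsCoordMap (α : ι → ℝ) (k : ι) :
    finrank ℝ (LinearMap.ker (lhsCoordMap α k)) = Fintype.card ι - 1 := by
  classical
  have hrk := LinearMap.finrank_range_add_finrank_ker (lhsCoordMap α k)
  rw [LinearMap.range_eq_top.mpr (lhsCoordMap_surjective α k), finrank_top] at hrk
  simp only [finrank_prod, finrank_self, finrank_pi] at hrk
  omega

end LhsCoordMap

section MixingKnapsack

variable {n : ℕ} {h a : Fin n → ℝ} {p y : ℝ} {z : Fin n → ℝ} {k : Fin n}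

theorem memQ_update_one (hQ : memQ n h a p y z) (hak : a k = 0) :
    memQ n h a p y (Function.update z k 1) := by
  obtain ⟨hy, hz01, hknap, hmix⟩ := hQ
  refine ⟨hy, fun j => ?_, ?_, fun j => ?_⟩
  · rcases eq_or_ne j k with rfl | hj
    · simp
    · simpa [hj] using hz01 j
  · convert hknap using 1
    refine Fintype.sum_congr _ _ fun j => ?_
    rcases eq_or_ne j k with rfl | hj
    · simp [hak]
    · simp [hj]
  · rcases eq_or_ne j k with rfl | hj
    · simpa using hy
    · simpa [hj] using hmix j

theorem sum_mul_update_one (α : Fin n → ℝ) (z : Fin n → ℝ) (k : Fin n) :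
    ∑ j, α j * Function.update z k 1 j = α k + ∑ j ∈ univ.erase k, α j * z j := by
  rw [← add_sum_erase _ _ (mem_univ k), Function.update_self, mul_one]
  congr 1
  exact sum_congr rfl fun j hj => by rw [Function.update_of_ne (ne_of_mem_erase hj)]

variable {α : Fin n → ℝ} {β : ℝ}

theorem sub_le_add_sum_erase_of_valid
    (hvalid : ∀ y z, memQ n h a p y z → β ≤ y + ∑ j, α j * z j) (hak : a k = 0)
    (hQ : memQ n h a p y z) :
    β - α k ≤ y + ∑ j ∈ univ.erase k, α j * z j := by
  have := hvalid y _ (memQ_update_one hQ hak)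
  rw [sum_mul_update_one] at this
  linarith

theorem eq_one_of_valid_of_tight
    (hvalid : ∀ y z, memQ n h a p y z → β ≤ y + ∑ j, α j * z j) (hak : a k = 0)
    (hαk : α k < 0) (hQ : memQ n h a p y z) (htight : y + ∑ j, α j * z j = β) :
    z k = 1 := by
  have hdom := sub_le_add_sum_erase_of_valid hvalid hak hQ
  rw [← add_sum_erase _ _ (mem_univ k)] at htight
  rcases hQ.2.1 k with hz | hz
  · rw [hz] at htight
    linarith
  · exact hz

end MixingKnapsack

theorem stmt10_general (n : ℕ) (h a : Fin n → ℝ) (p : ℝ)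
    (hann : ∀ j, 0 ≤ a j)
    (α : Fin n → ℝ) (β : ℝ) (k : Fin n)
    (hvalid : ∀ (y : ℝ) (z : Fin n → ℝ), memQ n h a p y z →
      β ≤ y + ∑ j, α j * z j) :
    (a k = 0 → α k < 0 → ∀ (y : ℝ) (z : Fin n → ℝ), memQ n h a p y z →
      β - α k ≤ y + ∑ j ∈ univ.erase k, α j * z j) ∧
    (α k < 0 → ∀ (y : ℝ) (z : Fin n → ℝ), memQ n h a p y z →
      0 ≤ -α k * (1 - z k)) ∧
    (α k < 0 →
      (∃ pts : Fin (n + 1) → ℝ × (Fin n → ℝ),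
        (∀ i, memQ n h a p (pts i).1 (pts i).2 ∧
          (pts i).1 + ∑ j, α j * (pts i).2 j = β) ∧
        AffineIndependent ℝ pts) →
      0 < a k) := by
  refine ⟨fun hak _ y z hQ => sub_le_add_sum_erase_of_valid hvalid hak hQ,
    fun hαk y z hQ => ?_, ?_⟩
  · rcases hQ.2.1 k with hz | hz <;> simp [hz]
    linarith
  · rintro hαk ⟨pts, hpts, hai⟩
    by_contra! hak
    have hak0 : a k = 0 := le_antisymm hak (hann k)
    have hface : ∀ i, lhsCoordMap α k (pts i) = (β, 1) := fun i => by
      rw [lhsCoordMap_apply, (hpts i).2,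
        eq_one_of_valid_of_tight hvalid hak0 hαk (hpts i).1 (hpts i).2]
    have hcard := hai.card_le_finrank_ker_add_one _ hface
    rw [finrank_ker_lhsCoordMap, Fintype.card_fin, Fintype.card_fin] at hcard
    have := k.pos
    omega

/-- If `a_k = 0` and `α_k < 0`, then the valid inequality `y + ∑ α_j z_j ≥ β` is
dominated: `y + ∑_{j≠k} α_j z_j ≥ β - α_k` is also valid, and `-α_k (1 - z_k) ≥ 0`
is valid (so the original is the sum of the two). In particular a facet-defining
inequality with `α_k < 0` must have `a_k > 0`. -/
theorem stmt10 (n : ℕ) (hn : 0 < n) (h a : Fin n → ℝ) (p : ℝ)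
    (hmono : ∀ i j : Fin n, i ≤ j → h j ≤ h i) (hhnn : ∀ j, 0 ≤ h j)
    (hann : ∀ j, 0 ≤ a j) (hap : ∀ j, a j ≤ p) (hsum : p < ∑ j, a j)
    (α : Fin n → ℝ) (β : ℝ) (k : Fin n)
    (hvalid : ∀ (y : ℝ) (z : Fin n → ℝ), memQ n h a p y z →
      β ≤ y + ∑ j, α j * z j) :
    (a k = 0 → α k < 0 → ∀ (y : ℝ) (z : Fin n → ℝ), memQ n h a p y z →
      β - α k ≤ y + ∑ j ∈ univ.erase k, α j * z j) ∧
    (α k < 0 → ∀ (y : ℝ) (z : Fin n → ℝ), memQ n h a p y z →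
      0 ≤ -α k * (1 - z k)) ∧
    (α k < 0 →
      (∃ pts : Fin (n + 1) → ℝ × (Fin n → ℝ),
        (∀ i, memQ n h a p (pts i).1 (pts i).2 ∧
          (pts i).1 + ∑ j, α j * (pts i).2 j = β) ∧
        AffineIndependent ℝ pts) →
      0 < a k) :=
  stmt10_general n h a p hann α β k hvalid
end

section
/- (Strengthened star inequalities are valid) For any T = {t₁ < t₂ < ... < t_a} ⊆ {1,...,ν} and with t_{a+1} interpreted via h_{t_{a+1}} := h_{ν+1}, the inequality y + Σ_{j=1}^{a} (h_{t_j} − h_{t_{j+1}}) z_{t_j} ≥ h_{t_1} holds for all (y,z) ∈ Q. -/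
open Finset

/-!
Walk along `t₁ < ⋯ < t_A` until the first index with `z_{t_k} = 0`. The terms before it
telescope to `h_{t₁} - h_{t_k}`, the remaining terms are nonnegative because `h` is
nonincreasing, and `y ≥ h_{t_k}` since `z_{t_k} = 0`. If there is no such index, the sum
telescopes to `h_{t₁} - h_{ν+1}`, and `y ≥ h_{ν+1}` because the knapsack constraint forbids
`z_j = 1` for all of the first `ν + 1` items.
-/

theorem le_add_sum_range_sub_mul {g z : ℕ → ℝ} {y : ℝ} (hg : Antitone g)
    (hz : ∀ m, z m = 0 ∨ z m = 1) {A : ℕ} (hy : ∀ m < A, z m = 0 → g m ≤ y)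
    (hyA : g A ≤ y) : g 0 ≤ y + ∑ m ∈ range A, (g m - g (m + 1)) * z m := by
  induction A generalizing g z with
  | zero => simpa using hyA
  | succ A ih =>
    rw [sum_range_succ']
    rcases hz 0 with hz0 | hz0
    · have hrest : 0 ≤ ∑ m ∈ range A, (g (m + 1) - g (m + 1 + 1)) * z (m + 1) :=
        sum_nonneg fun m _ => mul_nonneg (sub_nonneg.2 (hg (Nat.le_succ _)))
          ((hz (m + 1)).elim (·.ge) (fun h1 => h1 ▸ zero_le_one))
      rw [hz0, mul_zero, add_zero]
      linarith [hy 0 A.succ_pos hz0]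
    · have hshift := ih (g := fun m => g (m + 1)) (z := fun m => z (m + 1))
        (fun _ _ hmn => hg (Nat.succ_le_succ hmn)) (fun m => hz (m + 1))
        (fun m hm => hy (m + 1) (Nat.succ_lt_succ hm)) hyA
      rw [hz0, mul_one]
      linarith

theorem sk_le_sum_mul_of_eq_one {n : ℕ} {a z : Fin n → ℝ} {k : ℕ} (ha : ∀ j, 0 ≤ a j)
    (hz : ∀ j, z j = 0 ∨ z j = 1) (hk : ∀ j : Fin n, (j : ℕ) < k → z j = 1) :
    sk n a k ≤ ∑ j, a j * z j := by
  calc sk n a k = ∑ j ∈ univ.filter (fun j : Fin n => (j : ℕ) < k), a j * z j :=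
        sum_congr rfl fun j hj => by rw [hk j (mem_filter.1 hj).2, mul_one]
    _ ≤ ∑ j, a j * z j :=
        sum_le_sum_of_subset_of_nonneg (filter_subset _ _) fun j _ _ =>
          mul_nonneg (ha j) ((hz j).elim (·.ge) (fun h1 => h1 ▸ zero_le_one))

theorem memQ.le_of_eq_zero {n : ℕ} {h a : Fin n → ℝ} {p y : ℝ} {z : Fin n → ℝ}
    (hQ : memQ n h a p y z) {j : Fin n} (hj : z j = 0) : h j ≤ y := by
  simpa [hj] using hQ.2.2.2 j

theorem memQ.le_of_lt_sk {n : ℕ} {h a : Fin n → ℝ} {p y : ℝ} {z : Fin n → ℝ}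
    (hQ : memQ n h a p y z) (hh : Antitone h) (ha : ∀ j, 0 ≤ a j) {k : ℕ}
    (hk : p < sk n a (k + 1)) (hkn : k < n) : h ⟨k, hkn⟩ ≤ y := by
  obtain ⟨j, hjk, hj⟩ : ∃ j : Fin n, (j : ℕ) < k + 1 ∧ z j = 0 := by
    by_contra! hne
    have := sk_le_sum_mul_of_eq_one ha hQ.2.1 fun j hj => (hQ.2.1 j).resolve_left (hne j hj)
    linarith [hQ.2.2.1]
  exact (hh (Fin.le_def.2 (Nat.lt_succ_iff.1 hjk))).trans (hQ.le_of_eq_zero hj)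

theorem stmt11_general (n : ℕ) (h a : Fin n → ℝ) (p : ℝ)
    (hmono : ∀ i j : Fin n, i ≤ j → h j ≤ h i)
    (hann : ∀ j, 0 ≤ a j)
    (ν : ℕ) (hνn : ν < n) (hν2 : p < sk n a (ν + 1))
    (A : ℕ) (hA : 0 < A) (t : Fin A → Fin n) (ht : StrictMono t)
    (htν : ∀ j, (t j : ℕ) < ν) :
    ∀ (y : ℝ) (z : Fin n → ℝ), memQ n h a p y z →
      h (t ⟨0, hA⟩) ≤ y + ∑ j : Fin A,
        (h (t j) - (if hj : (j : ℕ) + 1 < A then h (t ⟨(j : ℕ) + 1, hj⟩)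
          else h ⟨ν, hνn⟩)) * z (t j) := by
  intro y z hQ
  have hh : Antitone h := hmono
  let s : ℕ → Fin n := fun m => if hm : m < A then t ⟨m, hm⟩ else ⟨ν, hνn⟩
  have hs : Monotone s := by
    refine monotone_nat_of_le_succ fun m => ?_
    by_cases hm1 : m + 1 < A
    · simp only [s, dif_pos hm1, dif_pos (Nat.lt_of_succ_lt hm1)]
      exact ht.monotone (Fin.mk_le_mk.2 m.le_succ)
    · by_cases hm : m < A
      · simp only [s, dif_neg hm1, dif_pos hm]
        exact Fin.le_def.2 (htν _).le
      · simp only [s, dif_neg hm1, dif_neg hm, le_refl]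
  have key := le_add_sum_range_sub_mul (A := A) (hh.comp_monotone hs) (fun m => hQ.2.1 (s m))
    (fun m _ => hQ.le_of_eq_zero) (by simpa [s] using hQ.le_of_lt_sk hh hann hν2 hνn)
  rw [← Fin.sum_univ_eq_sum_range] at key
  simpa [s, hA, apply_dite h] using key

/-- Validity of the strengthened star inequalities: for `T = {t₁ < ⋯ < t_A} ⊆ {1,…,ν}`
(0-based here, so `(t j) < ν`), with `h_{t_{A+1}} := h_{ν+1}`,
`y + ∑_j (h_{t_j} - h_{t_{j+1}}) z_{t_j} ≥ h_{t₁}` holds on `Q`. -/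
theorem stmt11 (n : ℕ) (hn : 0 < n) (h a : Fin n → ℝ) (p : ℝ)
    (hmono : ∀ i j : Fin n, i ≤ j → h j ≤ h i) (hhnn : ∀ j, 0 ≤ h j)
    (hann : ∀ j, 0 ≤ a j) (hap : ∀ j, a j ≤ p) (hsum : p < ∑ j, a j)
    (ν : ℕ) (hνn : ν < n) (hν1 : sk n a ν ≤ p) (hν2 : p < sk n a (ν + 1))
    (A : ℕ) (hA : 0 < A) (t : Fin A → Fin n) (ht : StrictMono t)
    (htν : ∀ j, (t j : ℕ) < ν) :
    ∀ (y : ℝ) (z : Fin n → ℝ), memQ n h a p y z →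
      h (t ⟨0, hA⟩) ≤ y + ∑ j : Fin A,
        (h (t j) - (if hj : (j : ℕ) + 1 < A then h (t ⟨(j : ℕ) + 1, hj⟩)
          else h ⟨ν, hνn⟩)) * z (t j) :=
  stmt11_general n h a p hmono hann ν hνn hν2 A hA t ht htν
end

section
/- (Generalized validity for two-sign-class inequalities) Let R ∪ S partition [n], δ ∈ ℝ₊^R, Δ ∈ ℝ₊^S, h ∈ ℝ. Then y + Σ_{j∈R} δⱼzⱼ + Σ_{j∈S} Δⱼ(1 − zⱼ) ≥ h holds for all (y,z) ∈ Q if and only if for every 0 ≤ k ≤ ν and every z* ∈ P_k: Σ_{j∈R, j≤k} δⱼ + Σ_{j∈S, j>k} Δⱼ(1 − z*ⱼ) + h_{k+1} ≥ h. -/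
open Finset

/-- Generalized validity for two-sign-class inequalities: with `R = Sᶜ`,
`y + ∑_{j∈R} δ_j z_j + ∑_{j∈S} Δ_j (1 - z_j) ≥ h₀` is valid for `Q` iff for every
`0 ≤ k ≤ ν` and every `z* ∈ P_k`,
`∑_{j∈R, j≤k} δ_j + ∑_{j∈S, j>k} Δ_j (1 - z*_j) + h_{k+1} ≥ h₀`. -/
theorem stmt16 (n : ℕ) (hn : 0 < n) (h a : Fin n → ℝ) (p : ℝ)
    (hmono : ∀ i j : Fin n, i ≤ j → h j ≤ h i) (hhnn : ∀ j, 0 ≤ h j)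
    (hann : ∀ j, 0 ≤ a j) (hap : ∀ j, a j ≤ p) (hsum : p < ∑ j, a j)
    (ν : ℕ) (hνn : ν < n) (hν1 : sk n a ν ≤ p) (hν2 : p < sk n a (ν + 1))
    (S : Finset (Fin n)) (δ Δ : Fin n → ℝ) (h₀ : ℝ)
    (hδ : ∀ j ∉ S, 0 ≤ δ j) (hΔ : ∀ j ∈ S, 0 ≤ Δ j) :
    (∀ (y : ℝ) (z : Fin n → ℝ), memQ n h a p y z →
      h₀ ≤ y + (∑ j ∈ Sᶜ, δ j * z j) + ∑ j ∈ S, Δ j * (1 - z j)) ↔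
    (∀ k : ℕ, ∀ hk : k ≤ ν, ∀ z : Fin n → ℝ, memPk n a p k z →
      h₀ ≤ (∑ j ∈ Sᶜ.filter (fun j : Fin n => (j : ℕ) < k), δ j) +
        (∑ j ∈ S.filter (fun j : Fin n => k ≤ (j : ℕ)), Δ j * (1 - z j)) +
        h ⟨k, lt_of_le_of_lt hk hνn⟩) := by
  classical
  constructor
  · -- forward direction
    intro hval k hk z hz
    obtain ⟨hzb, hzk⟩ := hz
    have hkn : k < n := lt_of_le_of_lt hk hνn
    have hz0 : ∀ j, 0 ≤ z j := fun j => by rcases hzb j with h' | h' <;> simp [h']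
    have hz1 : ∀ j, z j ≤ 1 := fun j => by rcases hzb j with h' | h' <;> simp [h']
    set z' : Fin n → ℝ := fun j => if (j : ℕ) < k then 1 else if j ∈ S then z j else 0
      with hz'def
    have hz'b : ∀ j, z' j = 0 ∨ z' j = 1 := by
      intro j
      simp only [hz'def]
      split_ifs with h1 h2
      · right; rfl
      · exact hzb j
      · left; rfl
    have hfilt : univ.filter (fun j : Fin n => ¬ (j : ℕ) < k)
        = univ.filter (fun j : Fin n => k ≤ (j : ℕ)) := by
      apply filter_congr; intro j _; simp [not_lt]
    have hmemQ : memQ n h a p (h ⟨k, hkn⟩) z' := by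
      refine ⟨hhnn _, hz'b, ?_, ?_⟩
      · have hsplit := Finset.sum_filter_add_sum_filter_not univ
          (fun j : Fin n => (j : ℕ) < k) (fun j => a j * z' j)
        have e1 : ∑ j ∈ univ.filter (fun j : Fin n => (j : ℕ) < k), a j * z' j
            = sk n a k := by
          unfold sk
          refine Finset.sum_congr rfl ?_
          intro j hj
          simp only [mem_filter] at hj
          simp [hz'def, hj.2]
        have e2 : ∑ j ∈ univ.filter (fun j : Fin n => ¬ (j : ℕ) < k), a j * z' j
            ≤ p - sk n a k := by
          rw [hfilt]
          refine le_trans (Finset.sum_le_sum ?_) hzk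
          intro j hj
          simp only [mem_filter] at hj
          have hjk : ¬ (j : ℕ) < k := not_lt.mpr hj.2
          by_cases h2 : j ∈ S
          · simp [hz'def, hjk, h2]
          · simp only [hz'def, if_neg hjk, if_neg h2, mul_zero]
            exact mul_nonneg (hann j) (hz0 j)
        rw [← hsplit]
        linarith
      · intro j
        rcases hz'b j with hj0 | hj1
        · have hjk : ¬ (j : ℕ) < k := by
            intro hc
            simp [hz'def, hc] at hj0
          have hle : (⟨k, hkn⟩ : Fin n) ≤ j := by
            simpa [Fin.le_def] using not_lt.mp hjk
          have := hmono ⟨k, hkn⟩ j hle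
          rw [hj0]
          simpa using this
        · rw [hj1]
          have := hhnn (⟨k, hkn⟩ : Fin n)
          linarith
    have hval' := hval (h ⟨k, hkn⟩) z' hmemQ
    -- compute the two sums at z'
    have eA : ∑ j ∈ Sᶜ, δ j * z' j
        = ∑ j ∈ Sᶜ.filter (fun j : Fin n => (j : ℕ) < k), δ j := by
      rw [← Finset.sum_filter_add_sum_filter_not Sᶜ (fun j : Fin n => (j : ℕ) < k)
        (fun j => δ j * z' j)]
      have e1 : ∑ j ∈ Sᶜ.filter (fun j : Fin n => (j : ℕ) < k), δ j * z' j
          = ∑ j ∈ Sᶜ.filter (fun j : Fin n => (j : ℕ) < k), δ j := by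
        refine Finset.sum_congr rfl ?_
        intro j hj
        simp only [mem_filter] at hj
        simp [hz'def, hj.2]
      have e2 : ∑ j ∈ Sᶜ.filter (fun j : Fin n => ¬ (j : ℕ) < k), δ j * z' j = 0 := by
        refine Finset.sum_eq_zero ?_
        intro j hj
        simp only [mem_filter, mem_compl] at hj
        simp [hz'def, hj.2, hj.1]
      rw [e1, e2, add_zero]
    have eB : ∑ j ∈ S, Δ j * (1 - z' j)
        = ∑ j ∈ S.filter (fun j : Fin n => k ≤ (j : ℕ)), Δ j * (1 - z j) := by
      rw [← Finset.sum_filter_add_sum_filter_not S (fun j : Fin n => (j : ℕ) < k)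
        (fun j => Δ j * (1 - z' j))]
      have e1 : ∑ j ∈ S.filter (fun j : Fin n => (j : ℕ) < k), Δ j * (1 - z' j) = 0 := by
        refine Finset.sum_eq_zero ?_
        intro j hj
        simp only [mem_filter] at hj
        simp [hz'def, hj.2]
      have e2 : ∑ j ∈ S.filter (fun j : Fin n => ¬ (j : ℕ) < k), Δ j * (1 - z' j)
          = ∑ j ∈ S.filter (fun j : Fin n => k ≤ (j : ℕ)), Δ j * (1 - z j) := by
        have hf : S.filter (fun j : Fin n => ¬ (j : ℕ) < k)
            = S.filter (fun j : Fin n => k ≤ (j : ℕ)) := by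
          apply filter_congr; intro j _; simp [not_lt]
        rw [hf]
        refine Finset.sum_congr rfl ?_
        intro j hj
        simp only [mem_filter] at hj
        have hjk : ¬ (j : ℕ) < k := not_lt.mpr hj.2
        simp [hz'def, hjk, hj.1]
      rw [e1, e2, zero_add]
    rw [eA, eB] at hval'
    linarith
  · -- backward direction
    intro hcond y z hmem
    obtain ⟨hy, hzb, hzk, hyy⟩ := hmem
    have hz0 : ∀ j, 0 ≤ z j := fun j => by rcases hzb j with h' | h' <;> simp [h']
    have hz1 : ∀ j, z j ≤ 1 := fun j => by rcases hzb j with h' | h' <;> simp [h']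
    have hT : (univ.filter fun j : Fin n => z j = 0).Nonempty := by
      by_contra hc
      rw [Finset.not_nonempty_iff_eq_empty, Finset.filter_eq_empty_iff] at hc
      have hall : ∀ j : Fin n, z j = 1 := by
        intro j
        rcases hzb j with h' | h'
        · exact absurd h' (hc (mem_univ j))
        · exact h'
      have : (∑ j, a j * z j) = ∑ j, a j := by
        refine Finset.sum_congr rfl ?_
        intro j _; rw [hall j, mul_one]
      rw [this] at hzk
      linarith
    set K : Fin n := (univ.filter fun j : Fin n => z j = 0).min' hT with hKdef
    have hKmem := Finset.min'_mem (univ.filter fun j : Fin n => z j = 0) hT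
    have hK0 : z K = 0 := (mem_filter.mp hKmem).2
    have hKmin : ∀ j : Fin n, (j : ℕ) < (K : ℕ) → z j = 1 := by
      intro j hj
      rcases hzb j with h' | h'
      · exfalso
        have : K ≤ j := Finset.min'_le _ j (mem_filter.mpr ⟨mem_univ j, h'⟩)
        exact absurd hj (not_lt.mpr this)
      · exact h'
    -- sum splitting at K
    have hsplit := Finset.sum_filter_add_sum_filter_not univ
      (fun j : Fin n => (j : ℕ) < (K : ℕ)) (fun j => a j * z j)
    have hfilt : univ.filter (fun j : Fin n => ¬ (j : ℕ) < (K : ℕ))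
        = univ.filter (fun j : Fin n => (K : ℕ) ≤ (j : ℕ)) := by
      apply filter_congr; intro j _; simp [not_lt]
    have e1 : ∑ j ∈ univ.filter (fun j : Fin n => (j : ℕ) < (K : ℕ)), a j * z j
        = sk n a (K : ℕ) := by
      unfold sk
      refine Finset.sum_congr rfl ?_
      intro j hj
      simp only [mem_filter] at hj
      rw [hKmin j hj.2, mul_one]
    have hskK : sk n a (K : ℕ) ≤ p := by
      rw [← e1]
      calc ∑ j ∈ univ.filter (fun j : Fin n => (j : ℕ) < (K : ℕ)), a j * z j
          ≤ ∑ j, a j * z j := by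
            refine Finset.sum_le_sum_of_subset_of_nonneg (filter_subset _ _) ?_
            intro j _ _
            exact mul_nonneg (hann j) (hz0 j)
        _ ≤ p := hzk
    have hKν : (K : ℕ) ≤ ν := by
      by_contra hc
      push_neg at hc
      have hmonoSk : sk n a (ν + 1) ≤ sk n a (K : ℕ) := by
        unfold sk
        refine Finset.sum_le_sum_of_subset_of_nonneg ?_ ?_
        · intro j hj
          simp only [mem_filter] at hj ⊢
          exact ⟨hj.1, lt_of_lt_of_le hj.2 hc⟩
        · intro j _ _; exact hann j
      linarith
    have hPk : memPk n a p (K : ℕ) z := by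
      refine ⟨hzb, ?_⟩
      have : ∑ j ∈ univ.filter (fun j : Fin n => (K : ℕ) ≤ (j : ℕ)), a j * z j
          = (∑ j, a j * z j) - sk n a (K : ℕ) := by
        rw [← hfilt, ← e1]
        linarith [hsplit]
      rw [this]
      linarith
    have hc := hcond (K : ℕ) hKν z hPk
    have hKeq : (⟨(K : ℕ), lt_of_le_of_lt hKν hνn⟩ : Fin n) = K := by
      apply Fin.ext; rfl
    rw [hKeq] at hc
    have hyK : h K ≤ y := by
      have := hyy K
      rw [hK0, mul_zero, add_zero] at this
      exact this
    have hA : ∑ j ∈ Sᶜ.filter (fun j : Fin n => (j : ℕ) < (K : ℕ)), δ j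
        ≤ ∑ j ∈ Sᶜ, δ j * z j := by
      have e : ∑ j ∈ Sᶜ.filter (fun j : Fin n => (j : ℕ) < (K : ℕ)), δ j
          = ∑ j ∈ Sᶜ.filter (fun j : Fin n => (j : ℕ) < (K : ℕ)), δ j * z j := by
        refine Finset.sum_congr rfl ?_
        intro j hj
        simp only [mem_filter] at hj
        rw [hKmin j hj.2, mul_one]
      rw [e]
      refine Finset.sum_le_sum_of_subset_of_nonneg (filter_subset _ _) ?_
      intro j hj _
      exact mul_nonneg (hδ j (mem_compl.mp hj)) (hz0 j)
    have hB : ∑ j ∈ S.filter (fun j : Fin n => (K : ℕ) ≤ (j : ℕ)), Δ j * (1 - z j)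
        ≤ ∑ j ∈ S, Δ j * (1 - z j) := by
      refine Finset.sum_le_sum_of_subset_of_nonneg (filter_subset _ _) ?_
      intro j hj _
      exact mul_nonneg (hΔ j hj) (by linarith [hz1 j])
    linarith
end

section
/- (Tightness of the g_k bound in the equal-weights case) In the setting above, if additionally aⱼ = m_S for all j ∈ S, then g_k(Δ) = Δ[k, |S| − ⌊(p − s_k)/m_S⌋] for all 0 ≤ k ≤ ν. -/
open Finset

/-!
When every item of `S` weighs `m_S`, a point `z ∈ P_k` is, as far as the objective is concerned,
just a choice of a set `W` of items of `S` beyond `k` with `|W| m_S ≤ p - s_k`, i.e.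
`|W| ≤ ⌊(p - s_k)/m_S⌋`: items outside `S` only use up capacity because `a ≥ 0`, and the cost is
the `Δ`-sum over the unchosen items. Since `Δ ≥ 0`, it is optimal to choose as many items as
allowed, and the unchosen ones then form an arbitrary set of the prescribed size.
-/

theorem sum_mul_one_sub_ite_eq_sum_sdiff {ι : Type*} [DecidableEq ι] {T W : Finset ι}
    (hWT : W ⊆ T) (f : ι → ℝ) :
    ∑ j ∈ T, f j * (1 - if j ∈ W then 1 else 0) = ∑ j ∈ T \ W, f j := by
  rw [← sum_sdiff hWT, sum_eq_zero (s := W) fun j hj => by simp [hj], add_zero]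
  exact sum_congr rfl fun j hj => by simp [(mem_sdiff.1 hj).2]

/-- If the right-hand side asks for a set of negative size, it is `sInf ∅ = 0`; the left-hand side
is then `0` as well, attained at `W = T`. -/
theorem sInf_sum_sdiff_card_le_eq {ι : Type*} [DecidableEq ι] (T : Finset ι) {f : ι → ℝ}
    (hf : ∀ j ∈ T, 0 ≤ f j) (l : ℤ) :
    sInf {x : ℝ | ∃ W ⊆ T, (W.card : ℤ) ≤ l ∧ x = ∑ j ∈ T \ W, f j} =
      sInf {x : ℝ | ∃ G ⊆ T, (G.card : ℤ) = T.card - l ∧ x = ∑ j ∈ G, f j} := by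
  by_cases hl : l ≤ T.card
  · apply csInf_eq_csInf_of_forall_exists_le
    · rintro _ ⟨W, hWT, hW, rfl⟩
      obtain ⟨G, hG, hGcard⟩ := exists_subset_card_eq (s := T \ W) (n := (T.card - l).toNat)
        (by rw [card_sdiff_of_subset hWT]; omega)
      exact ⟨_, ⟨G, hG.trans sdiff_subset, by omega, rfl⟩,
        sum_le_sum_of_subset_of_nonneg hG fun j hj _ => hf j (mem_sdiff.1 hj).1⟩
    · rintro _ ⟨G, hGT, hG, rfl⟩
      refine ⟨_, ⟨T \ G, sdiff_subset, ?_, rfl⟩, by rw [Finset.sdiff_sdiff_eq_self hGT]⟩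
      have := card_le_card hGT
      rw [card_sdiff_of_subset hGT]
      omega
  · rw [not_le] at hl
    have hempty : {x : ℝ | ∃ G ⊆ T, (G.card : ℤ) = T.card - l ∧ x = ∑ j ∈ G, f j} = ∅ :=
      Set.eq_empty_of_forall_notMem fun _ ⟨G, hGT, hG, _⟩ => by
        have := card_le_card hGT
        omega
    have hleast : IsLeast {x : ℝ | ∃ W ⊆ T, (W.card : ℤ) ≤ l ∧ x = ∑ j ∈ T \ W, f j} 0 :=
      ⟨⟨T, subset_rfl, hl.le, by simp⟩, fun _ ⟨W, _, _, hx⟩ =>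
        hx ▸ sum_nonneg fun j hj => hf j (mem_sdiff.1 hj).1⟩
    rw [hempty, Real.sInf_empty, hleast.csInf_eq]

section Knapsack

variable {n : ℕ} {a : Fin n → ℝ} {p mS : ℝ} {k : ℕ} {S : Finset (Fin n)}

theorem memPk_ite_of_card_mul_le (haeq : ∀ j ∈ S, a j = mS) {W : Finset (Fin n)}
    (hWS : W ⊆ S.filter (fun j : Fin n => k ≤ (j : ℕ))) (hW : (W.card : ℝ) * mS ≤ p - sk n a k) :
    memPk n a p k (fun j => if j ∈ W then 1 else 0) := by
  refine ⟨fun j => by by_cases hj : j ∈ W <;> simp [hj], ?_⟩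
  have hWU : W ⊆ univ.filter (fun j : Fin n => k ≤ (j : ℕ)) :=
    hWS.trans (filter_subset_filter _ (subset_univ S))
  simp only [mul_ite, mul_one, mul_zero]
  rwa [sum_ite_mem, inter_eq_right.2 hWU,
    sum_eq_card_nsmul fun j hj => haeq j (mem_filter.1 (hWS hj)).1, nsmul_eq_mul]

theorem card_mul_le_of_memPk (hann : ∀ j, 0 ≤ a j) (haeq : ∀ j ∈ S, a j = mS)
    {z : Fin n → ℝ} (hz : memPk n a p k z) :
    (((S.filter (fun j : Fin n => k ≤ (j : ℕ))).filter (z · = 1)).card : ℝ) * mS ≤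
      p - sk n a k := by
  set W := (S.filter (fun j : Fin n => k ≤ (j : ℕ))).filter (z · = 1)
  have hWU : W ⊆ univ.filter (fun j : Fin n => k ≤ (j : ℕ)) :=
    (filter_subset _ _).trans (filter_subset_filter _ (subset_univ S))
  calc (W.card : ℝ) * mS = ∑ j ∈ W, a j * z j := by
        rw [sum_eq_card_nsmul fun j hj => ?_, nsmul_eq_mul]
        obtain ⟨hjS, hzj⟩ := mem_filter.1 hj
        rw [hzj, mul_one, haeq j (mem_filter.1 hjS).1]
    _ ≤ ∑ j ∈ univ.filter (fun j : Fin n => k ≤ (j : ℕ)), a j * z j :=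
        sum_le_sum_of_subset_of_nonneg hWU fun j _ _ =>
          mul_nonneg (hann j) (by rcases hz.1 j with h | h <;> simp [h])
    _ ≤ p - sk n a k := hz.2

theorem setOf_memPk_eq_setOf_card_le_floor (hann : ∀ j, 0 ≤ a j) (hmS0 : 0 < mS)
    (haeq : ∀ j ∈ S, a j = mS) (Δ : Fin n → ℝ) :
    {x : ℝ | ∃ z : Fin n → ℝ, memPk n a p k z ∧
        x = ∑ j ∈ S.filter (fun j : Fin n => k ≤ (j : ℕ)), Δ j * (1 - z j)} =
      {x : ℝ | ∃ W ⊆ S.filter (fun j : Fin n => k ≤ (j : ℕ)),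
        (W.card : ℤ) ≤ ⌊(p - sk n a k) / mS⌋ ∧
          x = ∑ j ∈ S.filter (fun j : Fin n => k ≤ (j : ℕ)) \ W, Δ j} := by
  have hfloor (W : Finset (Fin n)) :
      (W.card : ℤ) ≤ ⌊(p - sk n a k) / mS⌋ ↔ (W.card : ℝ) * mS ≤ p - sk n a k := by
    rw [Int.le_floor, Int.cast_natCast, le_div_iff₀ hmS0]
  ext x
  constructor
  · rintro ⟨z, hz, rfl⟩
    refine ⟨_, filter_subset _ _, (hfloor _).2 (card_mul_le_of_memPk hann haeq hz), ?_⟩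
    rw [← sum_mul_one_sub_ite_eq_sum_sdiff (filter_subset _ _)]
    exact sum_congr rfl fun j hj => by rcases hz.1 j with h | h <;> simp [hj, h]
  · rintro ⟨W, hWS, hW, rfl⟩
    exact ⟨_, memPk_ite_of_card_mul_le haeq hWS ((hfloor W).1 hW),
      (sum_mul_one_sub_ite_eq_sum_sdiff hWS Δ).symm⟩

end Knapsack

theorem stmt18_general (n : ℕ) (a : Fin n → ℝ) (p : ℝ)
    (hann : ∀ j, 0 ≤ a j)
    (ν : ℕ)
    (S : Finset (Fin n)) (Δ : Fin n → ℝ) (hΔ : ∀ j ∈ S, 0 ≤ Δ j)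
    (mS : ℝ) (hmS0 : 0 < mS)
    (haeq : ∀ j ∈ S, a j = mS) :
    ∀ k : ℕ, k ≤ ν →
      sInf {x : ℝ | ∃ z : Fin n → ℝ, memPk n a p k z ∧
          x = ∑ j ∈ S.filter (fun j : Fin n => k ≤ (j : ℕ)), Δ j * (1 - z j)} =
      sInf {x : ℝ | ∃ G : Finset (Fin n),
          G ⊆ S.filter (fun j : Fin n => k ≤ (j : ℕ)) ∧
          (G.card : ℤ) =
            (((S.filter (fun j : Fin n => k ≤ (j : ℕ))).card : ℤ) -
              ⌊(p - sk n a k) / mS⌋) ∧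
          x = ∑ j ∈ G, Δ j} := by
  intro k _
  rw [setOf_memPk_eq_setOf_card_le_floor hann hmS0 haeq Δ,
    sInf_sum_sdiff_card_le_eq _ fun j hj => hΔ j (mem_filter.1 hj).1]

/-- Tightness of the `g_k` bound in the equal-weights case: if `a_j = m_S` for all
`j ∈ S`, then `g_k(Δ) = Δ[k, |S| - ⌊(p-s_k)/m_S⌋]` for all `0 ≤ k ≤ ν`. -/
theorem stmt18 (n : ℕ) (hn : 0 < n) (a : Fin n → ℝ) (p : ℝ)
    (hann : ∀ j, 0 ≤ a j) (hap : ∀ j, a j ≤ p) (hsum : p < ∑ j, a j)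
    (ν : ℕ) (hνn : ν < n) (hν1 : sk n a ν ≤ p) (hν2 : p < sk n a (ν + 1))
    (S : Finset (Fin n)) (Δ : Fin n → ℝ) (hΔ : ∀ j ∈ S, 0 ≤ Δ j)
    (mS : ℝ) (hmS0 : 0 < mS) (hmSle : ∀ j ∈ S, mS ≤ a j)
    (hmSmem : ∃ j ∈ S, a j = mS)
    (haeq : ∀ j ∈ S, a j = mS) :
    ∀ k : ℕ, k ≤ ν →
      sInf {x : ℝ | ∃ z : Fin n → ℝ, memPk n a p k z ∧
          x = ∑ j ∈ S.filter (fun j : Fin n => k ≤ (j : ℕ)), Δ j * (1 - z j)} =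
      sInf {x : ℝ | ∃ G : Finset (Fin n),
          G ⊆ S.filter (fun j : Fin n => k ≤ (j : ℕ)) ∧
          (G.card : ℤ) =
            (((S.filter (fun j : Fin n => k ≤ (j : ℕ))).card : ℤ) -
              ⌊(p - sk n a k) / mS⌋) ∧
          x = ∑ j ∈ G, Δ j} :=
  stmt18_general n a p hann ν S Δ hΔ mS hmS0 haeq
end

section
/- (Equal-probability specialization) Suppose aⱼ = 1 for all j ∈ [n] and p is a positive integer with p < n. Then ν = p, and for each 1 ≤ k ≤ p+1 and α ∈ ℝⁿ, f_{k−1}(α) = min{Σ_{j∈S'} αⱼ : S' ⊆ {k,...,n}, |S'| ≤ p − k + 1}. Consequently, an inequality y + Σⱼ αⱼzⱼ ≥ β is valid for Q if and only if Σ_{j≤k−1} αⱼ + min_{S' ⊆ {k,...,n}, |S'| ≤ p−k+1} Σ_{j∈S'} αⱼ + h_k ≥ β for all 1 ≤ k ≤ p+1. -/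
open Finset

lemma card_lt (n k : ℕ) : (univ.filter (fun j : Fin n => (j : ℕ) < k)).card = min k n := by
  have h1 : (univ.filter (fun j : Fin n => (j : ℕ) < k)).image Fin.val
      = Finset.range (min k n) := by
    ext x; simp [Fin.exists_iff]
  have h2 := Finset.card_image_of_injective (univ.filter (fun j : Fin n => (j : ℕ) < k))
    Fin.val_injective
  rw [h1, Finset.card_range] at h2; omega

lemma sk_eq (n k : ℕ) (a : Fin n → ℝ) (ha1 : ∀ j, a j = 1) :
    sk n a k = (min k n : ℝ) := by
  unfold sk
  simp only [ha1]
  rw [Finset.sum_const, card_lt]; simp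

-- binary sum = card of ones
lemma sum_binary (n : ℕ) (F : Finset (Fin n)) (z : Fin n → ℝ) (hz : ∀ j, z j = 0 ∨ z j = 1) :
    ∑ j ∈ F, z j = ((F.filter (fun j => z j = 1)).card : ℝ) := by
  rw [← Finset.sum_filter_add_sum_filter_not F (fun j => z j = 1)]
  have h1 : ∑ j ∈ F.filter (fun j => z j = 1), z j
      = ((F.filter (fun j => z j = 1)).card : ℝ) := by
    rw [Finset.sum_congr rfl (fun j hj => (Finset.mem_filter.mp hj).2)]
    simp
  have h2 : ∑ j ∈ F.filter (fun j => ¬ z j = 1), z j = 0 := by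
    apply Finset.sum_eq_zero
    intro j hj
    rcases hz j with h0 | h1
    · exact h0
    · exact absurd h1 (Finset.mem_filter.mp hj).2
  rw [h1, h2, add_zero]

-- abbreviation for the S'-set
def Sset (n p k : ℕ) (α : Fin n → ℝ) : Set ℝ :=
  {x : ℝ | ∃ S' : Finset (Fin n), (∀ j ∈ S', k ≤ (j : ℕ)) ∧
    S'.card ≤ p - k ∧ x = ∑ j ∈ S', α j}

lemma Sset_finite (n p k : ℕ) (α : Fin n → ℝ) : (Sset n p k α).Finite := by
  have : Sset n p k α ⊆ (fun S' : Finset (Fin n) => ∑ j ∈ S', α j) '' Set.univ := by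
    rintro x ⟨S', _, _, rfl⟩
    exact ⟨S', Set.mem_univ _, rfl⟩
  exact (Set.finite_univ.image _).subset this

lemma Sset_nonempty (n p k : ℕ) (α : Fin n → ℝ) : (Sset n p k α).Nonempty := by
  exact ⟨0, ∅, by simp⟩

lemma sum_mul_binary (n : ℕ) (F : Finset (Fin n)) (α z : Fin n → ℝ)
    (hz : ∀ j, z j = 0 ∨ z j = 1) :
    ∑ j ∈ F, α j * z j = ∑ j ∈ F.filter (fun j => z j = 1), α j := by
  rw [← Finset.sum_filter_add_sum_filter_not F (fun j => z j = 1)]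
  have h2 : ∑ j ∈ F.filter (fun j => ¬ z j = 1), α j * z j = 0 := by
    apply Finset.sum_eq_zero
    intro j hj
    rcases hz j with h0 | h1
    · rw [h0, mul_zero]
    · exact absurd h1 (Finset.mem_filter.mp hj).2
  rw [h2, add_zero]
  exact Finset.sum_congr rfl (fun j hj => by rw [(Finset.mem_filter.mp hj).2, mul_one])

example (n : ℕ) (F S' : Finset (Fin n)) (α : Fin n → ℝ) (hsub : S' ⊆ F) :
    ∑ j ∈ F, α j * (if j ∈ S' then (1:ℝ) else 0) = ∑ j ∈ S', α j := by
  simp only [mul_ite, mul_one, mul_zero]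
  rw [Finset.sum_ite_mem, Finset.inter_eq_right.mpr hsub]

lemma fk_set_eq (n p k : ℕ) (hk : k ≤ p) (hpn : p < n) (a α : Fin n → ℝ)
    (ha1 : ∀ j, a j = 1) :
    {x : ℝ | ∃ z : Fin n → ℝ, memPk n a (p : ℝ) k z ∧
      x = ∑ j ∈ univ.filter (fun j : Fin n => k ≤ (j : ℕ)), α j * z j} = Sset n p k α := by
  have hskk : sk n a k = (k : ℝ) := by
    rw [sk_eq n k a ha1]
    exact min_eq_left (by exact_mod_cast (by omega : k ≤ n))
  ext x
  constructor
  · rintro ⟨z, ⟨hz, hsum⟩, rfl⟩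
    set F := univ.filter (fun j : Fin n => k ≤ (j : ℕ)) with hF
    refine ⟨F.filter (fun j => z j = 1), ?_, ?_, ?_⟩
    · intro j hj
      exact (Finset.mem_filter.mp ((Finset.mem_filter.mp hj).1)).2
    · have h1 : ∑ j ∈ F, a j * z j = ∑ j ∈ F, z j := by
        simp [ha1]
      rw [h1, sum_binary n F z hz, hskk] at hsum
      have : ((F.filter (fun j => z j = 1)).card : ℝ) ≤ ((p - k : ℕ) : ℝ) := by
        rw [Nat.cast_sub hk]; exact hsum
      exact_mod_cast this
    · exact sum_mul_binary n F α z hz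
  · rintro ⟨S', hS1, hS2, rfl⟩
    set F := univ.filter (fun j : Fin n => k ≤ (j : ℕ)) with hF
    have hsub : S' ⊆ F := by
      intro j hj; simp [hF]; exact hS1 j hj
    refine ⟨fun j => if j ∈ S' then 1 else 0, ⟨fun j => by dsimp only; split <;> simp, ?_⟩, ?_⟩
    · have h1 : ∑ j ∈ F, a j * (if j ∈ S' then (1:ℝ) else 0) = (S'.card : ℝ) := by
        simp only [ha1, one_mul]
        rw [Finset.sum_ite_mem, Finset.inter_eq_right.mpr hsub]
        simp
      rw [h1, hskk]
      have : (S'.card : ℝ) ≤ ((p - k : ℕ) : ℝ) := by exact_mod_cast hS2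
      rw [Nat.cast_sub hk] at this
      exact this
    · simp only [mul_ite, mul_one, mul_zero]
      rw [Finset.sum_ite_mem, Finset.inter_eq_right.mpr hsub]

lemma valid_to_ineq (n : ℕ) (h a : Fin n → ℝ)
    (hmono : ∀ i j : Fin n, i ≤ j → h j ≤ h i) (hhnn : ∀ j, 0 ≤ h j)
    (ha1 : ∀ j, a j = 1) (p : ℕ) (hpn : p < n) (α : Fin n → ℝ) (β : ℝ)
    (hval : ∀ (y : ℝ) (z : Fin n → ℝ), memQ n h a (p : ℝ) y z → β ≤ y + ∑ j, α j * z j)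
    (k : ℕ) (hk : k ≤ p) :
    β ≤ (∑ j ∈ univ.filter (fun j : Fin n => (j : ℕ) < k), α j) +
      sInf (Sset n p k α) + h ⟨k, lt_of_le_of_lt hk hpn⟩ := by
  set A := ∑ j ∈ univ.filter (fun j : Fin n => (j : ℕ) < k), α j with hA
  have hklt : k < n := lt_of_le_of_lt hk hpn
  have key : β - A - h ⟨k, hklt⟩ ≤ sInf (Sset n p k α) := by
    apply le_csInf (Sset_nonempty n p k α)
    rintro x ⟨S', hS1, hS2, rfl⟩
    set z : Fin n → ℝ := fun j => if (j : ℕ) < k ∨ j ∈ S' then 1 else 0 with hzdef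
    set T := univ.filter (fun j : Fin n => (j : ℕ) < k ∨ j ∈ S') with hT
    have hTu : T = (univ.filter (fun j : Fin n => (j : ℕ) < k)) ∪ S' := by
      ext j; simp [hT]
    have hdisj : Disjoint (univ.filter (fun j : Fin n => (j : ℕ) < k)) S' := by
      rw [Finset.disjoint_left]
      intro j hj hj'
      have := hS1 j hj'
      have := (Finset.mem_filter.mp hj).2
      omega
    have hTcard : T.card ≤ p := by
      rw [hTu, Finset.card_union_of_disjoint hdisj, card_lt, min_eq_left (by omega : k ≤ n)]
      omega
    have hmem : memQ n h a (p : ℝ) (h ⟨k, hklt⟩) z := by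
      refine ⟨hhnn _, fun j => by simp only [hzdef]; split <;> simp, ?_, ?_⟩
      · have : ∑ j, a j * z j = (T.card : ℝ) := by
          simp only [ha1, one_mul, hzdef, hT]
          rw [Finset.sum_boole]
        rw [this]; exact_mod_cast hTcard
      · intro j
        by_cases hc : (j : ℕ) < k ∨ j ∈ S'
        · have : z j = 1 := by simp [hzdef, hc]
          rw [this, mul_one]
          have := hhnn (⟨k, hklt⟩ : Fin n)
          linarith
        · have hz0 : z j = 0 := by simp only [hzdef]; rw [if_neg hc]
          push_neg at hc
          have hle : (⟨k, hklt⟩ : Fin n) ≤ j := by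
            rw [Fin.le_def]; exact hc.1
          rw [hz0, mul_zero, add_zero]
          exact hmono _ _ hle
    have hsum : ∑ j, α j * z j = A + ∑ j ∈ S', α j := by
      have h1 : ∀ j, α j * z j = if (j : ℕ) < k ∨ j ∈ S' then α j else 0 := by
        intro j; simp only [hzdef, mul_ite, mul_one, mul_zero]
      rw [Finset.sum_congr rfl (fun j _ => h1 j), ← Finset.sum_filter, ← hT, hTu,
        Finset.sum_union hdisj]
    have := hval _ z hmem
    rw [hsum] at this
    linarith
  linarith

lemma ineq_to_valid (n : ℕ) (h a : Fin n → ℝ)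
    (hmono : ∀ i j : Fin n, i ≤ j → h j ≤ h i) (hhnn : ∀ j, 0 ≤ h j)
    (ha1 : ∀ j, a j = 1) (p : ℕ) (hpn : p < n) (α : Fin n → ℝ) (β : ℝ)
    (hineq : ∀ k : ℕ, ∀ hk : k ≤ p,
      β ≤ (∑ j ∈ univ.filter (fun j : Fin n => (j : ℕ) < k), α j) +
        sInf (Sset n p k α) + h ⟨k, lt_of_le_of_lt hk hpn⟩)
    (y : ℝ) (z : Fin n → ℝ) (hQ : memQ n h a (p : ℝ) y z) :
    β ≤ y + ∑ j, α j * z j := by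
  obtain ⟨hy, hz, hks, hmix⟩ := hQ
  set T := univ.filter (fun j : Fin n => z j = 1) with hT
  have hTcard : T.card ≤ p := by
    have h1 : ∑ j, a j * z j = (T.card : ℝ) := by
      simp only [ha1, one_mul]
      exact sum_binary n univ z hz
    rw [h1] at hks
    exact_mod_cast hks
  have hTne : (Tᶜ : Finset (Fin n)).Nonempty := by
    rw [← Finset.card_pos, Finset.card_compl]
    simp only [Fintype.card_fin]
    omega
  set j0 := Tᶜ.min' hTne with hj0
  have hj0mem : j0 ∈ Tᶜ := Finset.min'_mem _ _
  set k := (j0 : ℕ) with hk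
  have hbelow : ∀ i : Fin n, (i : ℕ) < k → i ∈ T := by
    intro i hi
    by_contra hiT
    have : j0 ≤ i := Finset.min'_le _ _ (Finset.mem_compl.mpr hiT)
    rw [Fin.le_def] at this
    omega
  have hfilt : univ.filter (fun j : Fin n => (j : ℕ) < k) = T.filter (fun j : Fin n => (j : ℕ) < k) := by
    ext j
    simp only [Finset.mem_filter, Finset.mem_univ, true_and]
    exact ⟨fun hj => ⟨hbelow j hj, hj⟩, fun hj => hj.2⟩
  have hkcard : (univ.filter (fun j : Fin n => (j : ℕ) < k)).card = k := by
    rw [card_lt, min_eq_left (le_of_lt j0.isLt)]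
  have hkp : k ≤ p := by
    have : (univ.filter (fun j : Fin n => (j : ℕ) < k)).card ≤ T.card := by
      rw [hfilt]; exact Finset.card_filter_le _ _
    omega
  set S' := T.filter (fun j : Fin n => k ≤ (j : ℕ)) with hS'
  have hScard : S'.card ≤ p - k := by
    have := Finset.card_filter_add_card_filter_not (s := T)
      (p := fun j : Fin n => (j : ℕ) < k)
    have heq : T.filter (fun j : Fin n => ¬ (j : ℕ) < k) = S' := by
      apply Finset.filter_congr
      intro j _
      simp [not_lt]
    rw [heq, ← hfilt, hkcard] at this
    omega
  have hj00 : z j0 = 0 := by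
    rcases hz j0 with h0 | h1
    · exact h0
    · exfalso
      have : j0 ∈ T := by rw [hT]; simp [h1]
      exact (Finset.mem_compl.mp hj0mem) this
  have hyj0 : h j0 ≤ y := by
    have := hmix j0
    rw [hj00, mul_zero, add_zero] at this
    exact this
  have hj0eq : (⟨k, lt_of_le_of_lt hkp hpn⟩ : Fin n) = j0 := by
    apply Fin.ext; rfl
  have hInf : sInf (Sset n p k α) ≤ ∑ j ∈ S', α j := by
    apply csInf_le (Sset_finite n p k α).bddBelow
    exact ⟨S', fun j hj => (Finset.mem_filter.mp hj).2, hScard, rfl⟩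
  have hsum : ∑ j, α j * z j =
      (∑ j ∈ univ.filter (fun j : Fin n => (j : ℕ) < k), α j) + ∑ j ∈ S', α j := by
    rw [sum_mul_binary n univ α z hz, ← hT,
      ← Finset.sum_filter_add_sum_filter_not T (fun j => (j : ℕ) < k), ← hfilt]
    congr 1
    apply Finset.sum_congr
    · apply Finset.filter_congr
      intro j _
      simp [not_lt]
    · intros; rfl
  have := hineq k hkp
  rw [hj0eq] at this
  rw [hsum]
  linarith


/-- Equal-probability specialization (Theorem 3 of Luedtke et al. recovered):
if `a_j = 1` for all `j` and `1 ≤ p < n` is an integer, then `ν = p`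
(i.e. `s_k ≤ p ↔ k ≤ p`), for each `0 ≤ k ≤ p` (paper's `k-1` with `1 ≤ k ≤ p+1`)
`f_k(α) = min{∑_{j∈S'} α_j : S' ⊆ {k+1,…,n}, |S'| ≤ p - k}`, and
`y + ∑ α_j z_j ≥ β` is valid for `Q` iff
`∑_{j≤k} α_j + min{…} + h_{k+1} ≥ β` for all `0 ≤ k ≤ p`. -/
theorem stmt19 (n : ℕ) (hn : 0 < n) (h a : Fin n → ℝ)
    (hmono : ∀ i j : Fin n, i ≤ j → h j ≤ h i) (hhnn : ∀ j, 0 ≤ h j)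
    (ha1 : ∀ j, a j = 1)
    (p : ℕ) (hp1 : 1 ≤ p) (hpn : p < n) :
    (∀ k : ℕ, sk n a k ≤ (p : ℝ) ↔ k ≤ p) ∧
    (∀ (α : Fin n → ℝ) (k : ℕ), k ≤ p →
      fk n a (p : ℝ) α k =
        sInf {x : ℝ | ∃ S' : Finset (Fin n), (∀ j ∈ S', k ≤ (j : ℕ)) ∧
          S'.card ≤ p - k ∧ x = ∑ j ∈ S', α j}) ∧
    (∀ (α : Fin n → ℝ) (β : ℝ),
      (∀ (y : ℝ) (z : Fin n → ℝ), memQ n h a (p : ℝ) y z →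
        β ≤ y + ∑ j, α j * z j) ↔
      (∀ k : ℕ, ∀ hk : k ≤ p,
        β ≤ (∑ j ∈ univ.filter (fun j : Fin n => (j : ℕ) < k), α j) +
          sInf {x : ℝ | ∃ S' : Finset (Fin n), (∀ j ∈ S', k ≤ (j : ℕ)) ∧
            S'.card ≤ p - k ∧ x = ∑ j ∈ S', α j} +
          h ⟨k, lt_of_le_of_lt hk hpn⟩)) := by
  refine ⟨?_, ?_, ?_⟩
  · intro k
    rw [sk_eq n k a ha1, min_le_iff]
    constructor
    · rintro (hle | hle)
      · exact_mod_cast hle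
      · exact absurd (by exact_mod_cast hle : n ≤ p) (by omega)
    · intro hle
      exact Or.inl (by exact_mod_cast hle)
  · intro α k hk
    show fk n a (p : ℝ) α k = sInf (Sset n p k α)
    unfold fk
    rw [fk_set_eq n p k hk hpn a α ha1]
  · intro α β
    constructor
    · intro hval k hk
      exact valid_to_ineq n h a hmono hhnn ha1 p hpn α β hval k hk
    · intro hineq y z hQ
      exact ineq_to_valid n h a hmono hhnn ha1 p hpn α β hineq y z hQ
end
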